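/- For integers K ≥ 3 and 1 ≤ i < K−1: Λ(K, i+1) ≤ Λ(K, i), where Λ(K,i) = ⌈K(K−i)/t(K,i)⌉ and t(K,i) = 2 + ⌊i/(K−i+1)⌋ + ⌊(i−1)/(K−i+1)⌋. (The rate Λ(K,i)/K of the new scheme is non-increasing in the cache memory parameter i.) -/

import Mathlib

/-! The numerator `K * (K - i)` of `Λ K i` decreases in `i`, while its denominator `t K i` increases:
both floor quotients in `t K i` have numerators growing and the common denominator `K - i + 1`
shrinking as `i` grows. Rounding up preserves the resulting inequality of quotients. -/

def t (K i : ℕ) : ℕ := 2 + i / (K - i + 1) + (i - 1) / (K - i + 1)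

def Λ (K i : ℕ) : ℕ := ⌈((K * (K - i) : ℕ) : ℚ) / (t K i)⌉₊

theorem t_pos (K i : ℕ) : 0 < t K i := by
  unfold t
  positivity

theorem t_monotone (K : ℕ) : Monotone (t K) := by
  refine monotone_nat_of_le_succ fun i => ?_
  have hden : K - (i + 1) + 1 ≤ K - i + 1 := by omega
  have hq : i / (K - i + 1) ≤ (i + 1) / (K - (i + 1) + 1) :=
    Nat.div_le_div (Nat.le_succ i) hden (Nat.succ_ne_zero _)
  have hq' : (i - 1) / (K - i + 1) ≤ (i + 1 - 1) / (K - (i + 1) + 1) :=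
    Nat.div_le_div (by omega) hden (Nat.succ_ne_zero _)
  unfold t
  omega

theorem Λ_antitone (K : ℕ) : Antitone (Λ K) := by
  intro i j hij
  refine Nat.ceil_le_ceil (div_le_div₀ (Nat.cast_nonneg _) ?_ ?_ ?_)
  · exact_mod_cast Nat.mul_le_mul_left K (Nat.sub_le_sub_left hij K)
  · exact_mod_cast t_pos K i
  · exact_mod_cast t_monotone K hij

theorem stmt_17_general (K i : ℕ) :
    Λ K (i + 1) ≤ Λ K i :=
  Λ_antitone K (Nat.le_succ i)

theorem stmt_17 (K i : ℕ) (hK : 3 ≤ K) (hi : 1 ≤ i) (hiK : i < K - 1) :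
    Λ K (i + 1) ≤ Λ K i :=
  stmt_17_general K i
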